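/- arXiv:1712.00973 — 2 statements merged into one kernel-verified Lean document; each statement's English description precedes it below -/
import Mathlib

section
/- Let B be an n×n skew-symmetrizable integer matrix and σ_{s+1} = (k_1,…,k_{s+1}) a sequence of column indices. Write [B_{σ_i}; C_{σ_i}] = μ_{k_i}⋯μ_{k_1}([B; I_n]). If the column index k_{s+1} is green in C_{σ_s} and j ≠ k_{s+1} is also green in C_{σ_s}, then j is green in C_{σ_{s+1}}. -/
variable {ι : Type} [Fintype ι] [DecidableEq ι]

/-- Mutation in direction `k` of a `2N × N` integer matrix, rows indexed by
`ι ⊕ ι` (the principal part is the `Sum.inl` block). -/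
def mutate (k : ι) (B : Matrix (ι ⊕ ι) ι ℤ) : Matrix (ι ⊕ ι) ι ℤ :=
  fun i j =>
    if i = Sum.inl k ∨ j = k then -B i j
    else B i j + Int.sign (B i k) * max (B i k * B (Sum.inl k) j) 0

/-- Apply a sequence of mutations `μ_{k_s} ⋯ μ_{k_1}` (the list is `[k_1, …, k_s]`). -/
def mutateSeq (L : List ι) (B : Matrix (ι ⊕ ι) ι ℤ) : Matrix (ι ⊕ ι) ι ℤ :=
  L.foldl (fun M k => mutate k M) B

/-- The C-matrix of `B` along the mutation sequence `L`: the lower block of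
the mutation of `[B; I]`. -/
def Cmat (B : Matrix ι ι ℤ) (L : List ι) : Matrix ι ι ℤ :=
  fun i j => mutateSeq L (Matrix.fromRows B 1) (Sum.inr i) j

/-- A column index `j` is green in the C-matrix along `L` if its column is entrywise `≥ 0`. -/
def IsGreen (B : Matrix ι ι ℤ) (L : List ι) (j : ι) : Prop :=
  ∀ i, 0 ≤ Cmat B L i j

/-- `L` is a green sequence: each mutation occurs at a green index of the current C-matrix. -/
def IsGreenSeq (B : Matrix ι ι ℤ) (L : List ι) : Prop :=
  ∀ (t : ℕ) (h : t < L.length), IsGreen B (L.take t) (L.get ⟨t, h⟩)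

/-- `L` is a green-to-red sequence: the final C-matrix is entrywise `≤ 0`. -/
def IsGreenToRed (B : Matrix ι ι ℤ) (L : List ι) : Prop :=
  ∀ i j, Cmat B L i j ≤ 0

/-- `L` is a maximal green sequence of `B`. -/
def IsMGS (B : Matrix ι ι ℤ) (L : List ι) : Prop :=
  IsGreenSeq B L ∧ IsGreenToRed B L

section Mutation

omit [Fintype ι]

theorem mutate_apply_of_ne {k j : ι} {r : ι ⊕ ι} (M : Matrix (ι ⊕ ι) ι ℤ)
    (hr : r ≠ Sum.inl k) (hj : j ≠ k) :
    mutate k M r j = M r j + (M r k).sign * max (M r k * M (Sum.inl k) j) 0 := by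
  rw [mutate, if_neg (not_or.mpr ⟨hr, hj⟩)]

theorem mutate_nonneg_of_nonneg {k j : ι} {r : ι ⊕ ι} {M : Matrix (ι ⊕ ι) ι ℤ}
    (hr : r ≠ Sum.inl k) (hj : j ≠ k) (hMj : 0 ≤ M r j) (hMk : 0 ≤ M r k) :
    0 ≤ mutate k M r j := by
  rw [mutate_apply_of_ne M hr hj]
  exact add_nonneg hMj (mul_nonneg (Int.sign_nonneg_iff.mpr hMk) (le_max_right _ _))

theorem Cmat_append_singleton (B : Matrix ι ι ℤ) (L : List ι) (k i j : ι) :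
    Cmat B (L ++ [k]) i j = mutate k (mutateSeq L (Matrix.fromRows B 1)) (Sum.inr i) j := by
  simp only [Cmat, mutateSeq, List.foldl_append, List.foldl_cons, List.foldl_nil]

end Mutation

theorem green_stays_green_general {n : ℕ} (B : Matrix (Fin n) (Fin n) ℤ)
    (L : List (Fin n)) (k j : Fin n) (hjk : j ≠ k)
    (hk : IsGreen B L k) (hj : IsGreen B L j) :
    IsGreen B (L ++ [k]) j := by
  intro i
  rw [Cmat_append_singleton]
  exact mutate_nonneg_of_nonneg Sum.inr_ne_inl hjk (hj i) (hk i)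

/-- If `k` is green after the sequence `L` and `j ≠ k` is also green, then `j`
remains green after further mutating at `k`. -/
theorem green_stays_green {n : ℕ} (B : Matrix (Fin n) (Fin n) ℤ)
    (S : Fin n → ℤ) (hS : ∀ i, 0 < S i)
    (hskew : ∀ i j, S i * B i j = -(S j * B j i))
    (L : List (Fin n)) (k j : Fin n) (hjk : j ≠ k)
    (hk : IsGreen B L k) (hj : IsGreen B L j) :
    IsGreen B (L ++ [k]) j :=
  green_stays_green_general B L k j hjk hk hj
end

section
/- Let B = [[B₁,B₃],[B₂,B₄]] be an (n+m)×(n+m) skew-symmetrizable integer matrix with B₂ ∈ M_{m×n}(ℤ_{≥0}). Suppose k = (k_1,…,k_s) with all k_i ≤ n is a maximal green sequence of B₁ and j = (k_{s+1},…,k_{s+p}) with all k_i > n is a maximal green sequence of B₄ (indices shifted by n). Then the concatenated sequence (k_1,…,k_s,k_{s+1},…,k_{s+p}) is a maximal green sequence of B. -/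
variable {ι : Type} [Fintype ι] [DecidableEq ι]

/- ------------------------------------------------------------------ -/
/- Auxiliary lemmas                                                    -/
/- ------------------------------------------------------------------ -/

lemma mutateSeq_nil (B : Matrix (ι ⊕ ι) ι ℤ) : mutateSeq [] B = B := rfl

lemma mutateSeq_cons (k : ι) (L : List ι) (B : Matrix (ι ⊕ ι) ι ℤ) :
    mutateSeq (k :: L) B = mutateSeq L (mutate k B) := rfl

lemma mutateSeq_append (L₁ L₂ : List ι) (B : Matrix (ι ⊕ ι) ι ℤ) :
    mutateSeq (L₁ ++ L₂) B = mutateSeq L₂ (mutateSeq L₁ B) := by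
  simp [mutateSeq, List.foldl_append]

lemma mutateSeq_concat (L : List ι) (k : ι) (B : Matrix (ι ⊕ ι) ι ℤ) :
    mutateSeq (L ++ [k]) B = mutate k (mutateSeq L B) := by
  rw [mutateSeq_append]; rfl

lemma Cmat_apply (B : Matrix ι ι ℤ) (L : List ι) (i j : ι) :
    Cmat B L i j = mutateSeq L (Matrix.fromRows B 1) (Sum.inr i) j := rfl

lemma mutate_row (k : ι) (M : Matrix (ι ⊕ ι) ι ℤ) (j : ι) :
    mutate k M (Sum.inl k) j = -M (Sum.inl k) j := by
  simp [mutate]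

lemma mutate_col (k : ι) (M : Matrix (ι ⊕ ι) ι ℤ) (i : ι ⊕ ι) :
    mutate k M i k = -M i k := by
  simp [mutate]

lemma mutate_else {k : ι} (M : Matrix (ι ⊕ ι) ι ℤ) {i : ι ⊕ ι} {j : ι}
    (hi : i ≠ Sum.inl k) (hj : j ≠ k) :
    mutate k M i j = M i j + Int.sign (M i k) * max (M i k * M (Sum.inl k) j) 0 := by
  simp [mutate, hi, hj]

/- arithmetic helpers -/

lemma pos_mul_max {c : ℤ} (hc : 0 ≤ c) (x : ℤ) : c * max x 0 = max (c * x) 0 := by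
  rw [mul_max_of_nonneg _ _ hc, mul_zero]

lemma sign_mul_max_of_nonneg {a : ℤ} (ha : 0 ≤ a) (b : ℤ) :
    Int.sign a * max (a * b) 0 = a * max b 0 := by
  rcases ha.lt_or_eq with h | h
  · rw [Int.sign_eq_one_of_pos h, one_mul, pos_mul_max h.le]
  · rw [← h]; simp

lemma sign_mul_max_eq_zero {a b : ℤ} (ha : 0 ≤ a) (hb : b ≤ 0) :
    Int.sign a * max (a * b) 0 = 0 := by
  rw [sign_mul_max_of_nonneg ha, max_eq_right hb, mul_zero]

lemma sign_mul_max_eq (a b : ℤ) :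
    Int.sign a * max (a * b) 0 = max a 0 * max b 0 - max (-a) 0 * max (-b) 0 := by
  rcases lt_trichotomy a 0 with h | h | h
  · rw [Int.sign_eq_neg_one_of_neg h, max_eq_right h.le,
      max_eq_left (by linarith : (0:ℤ) ≤ -a)]
    have hx : max (a * b) 0 = -a * max (-b) 0 := by
      rw [pos_mul_max (by linarith : (0:ℤ) ≤ -a), neg_mul_neg]
    rw [hx]; ring
  · subst h; simp
  · rw [Int.sign_eq_one_of_pos h, max_eq_left h.le,
      max_eq_right (by linarith : -a ≤ (0:ℤ)), one_mul, pos_mul_max h.le]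
    ring

lemma key_arith {si sj sk a b c d : ℤ} (hsi : 0 < si) (hsj : 0 < sj) (hsk : 0 < sk)
    (h1 : si * a = -(sk * d)) (h2 : sk * b = -(sj * c)) :
    si * (Int.sign a * max (a * b) 0) = -(sj * (Int.sign c * max (c * d) 0)) := by
  have e1 : si * max a 0 = sk * max (-d) 0 := by
    rw [pos_mul_max hsi.le, pos_mul_max hsk.le]
    congr 1; linarith
  have e2 : si * max (-a) 0 = sk * max d 0 := by
    rw [pos_mul_max hsi.le, pos_mul_max hsk.le]
    congr 1; linarith
  have e3 : sk * max b 0 = sj * max (-c) 0 := by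
    rw [pos_mul_max hsk.le, pos_mul_max hsj.le]
    congr 1; linarith
  have e4 : sk * max (-b) 0 = sj * max c 0 := by
    rw [pos_mul_max hsk.le, pos_mul_max hsj.le]
    congr 1; linarith
  apply mul_left_cancel₀ hsk.ne'
  rw [sign_mul_max_eq a b, sign_mul_max_eq c d]
  linear_combination (sk * max b 0) * e1 + (sk * max (-d) 0) * e3
    - (sk * max (-b) 0) * e2 - (sk * max d 0) * e4

/- skew-symmetrizability of the principal part is preserved by mutation -/

lemma skew_mutate (S : ι → ℤ) (hS : ∀ i, 0 < S i) (k : ι) (M : Matrix (ι ⊕ ι) ι ℤ)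
    (h : ∀ i j, S i * M (Sum.inl i) j = -(S j * M (Sum.inl j) i)) :
    ∀ i j, S i * mutate k M (Sum.inl i) j = -(S j * mutate k M (Sum.inl j) i) := by
  intro i j
  by_cases hik : i = k
  · by_cases hjk : j = k
    · rw [hik, hjk, mutate_col, mul_neg]
      have h0 := h k k
      linarith
    · rw [hik, mutate_row, mutate_col, mul_neg, mul_neg]
      have h0 := h k j
      linarith
  · by_cases hjk : j = k
    · rw [hjk, mutate_col, mutate_row, mul_neg, mul_neg]
      have h0 := h i k
      linarith
    · rw [mutate_else M (by simp [hik]) hjk, mutate_else M (by simp [hjk]) hik]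
      have key := key_arith (hS i) (hS j) (hS k) (h i k) (h k j)
      have h0 := h i j
      rw [mul_add, mul_add, neg_add]
      linarith

lemma skew_mutateSeq (S : ι → ℤ) (hS : ∀ i, 0 < S i) (L : List ι) :
    ∀ (M : Matrix (ι ⊕ ι) ι ℤ),
      (∀ i j, S i * M (Sum.inl i) j = -(S j * M (Sum.inl j) i)) →
      ∀ i j, S i * mutateSeq L M (Sum.inl i) j = -(S j * mutateSeq L M (Sum.inl j) i) := by
  induction L with
  | nil => intro M h; exact h
  | cons k L ih => intro M h; exact ih (mutate k M) (skew_mutate S hS k M h)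

/- ------------------------------------------------------------------ -/
/- Phase 1: mutations at `Sum.inl` indices                             -/
/- ------------------------------------------------------------------ -/

section Phase
variable {α β : Type} [Fintype α] [DecidableEq α] [Fintype β] [DecidableEq β]

def PhaseInv (B₁ : Matrix α α ℤ) (P : Matrix β α ℤ)
    (M₀ : Matrix ((α ⊕ β) ⊕ (α ⊕ β)) (α ⊕ β) ℤ) (L : List α) : Prop :=
  (∀ a j, mutateSeq (L.map Sum.inl) M₀ (Sum.inl (Sum.inl a)) (Sum.inl j)
      = mutateSeq L (Matrix.fromRows B₁ 1) (Sum.inl a) j) ∧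
  (∀ a j, mutateSeq (L.map Sum.inl) M₀ (Sum.inr (Sum.inl a)) (Sum.inl j)
      = mutateSeq L (Matrix.fromRows B₁ 1) (Sum.inr a) j) ∧
  (∀ b (j : α), mutateSeq (L.map Sum.inl) M₀ (Sum.inr (Sum.inr b)) (Sum.inl j) = 0) ∧
  (∀ a (j : β), mutateSeq (L.map Sum.inl) M₀ (Sum.inr (Sum.inl a)) (Sum.inr j) = 0) ∧
  (∀ b (j : β), mutateSeq (L.map Sum.inl) M₀ (Sum.inr (Sum.inr b)) (Sum.inr j)
      = M₀ (Sum.inr (Sum.inr b)) (Sum.inr j)) ∧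
  (∀ b (j : α), mutateSeq (L.map Sum.inl) M₀ (Sum.inl (Sum.inr b)) (Sum.inl j)
      = ∑ a, P b a * mutateSeq L (Matrix.fromRows B₁ 1) (Sum.inr a) j) ∧
  (∀ b (j : β), mutateSeq (L.map Sum.inl) M₀ (Sum.inl (Sum.inr b)) (Sum.inr j)
      = M₀ (Sum.inl (Sum.inr b)) (Sum.inr j))

lemma phase_step (S : α ⊕ β → ℤ) (hS : ∀ i, 0 < S i)
    (B₁ : Matrix α α ℤ) (P : Matrix β α ℤ) (hP : ∀ b a, 0 ≤ P b a)
    (M₀ : Matrix ((α ⊕ β) ⊕ (α ⊕ β)) (α ⊕ β) ℤ)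
    (hskew : ∀ i j, S i * M₀ (Sum.inl i) j = -(S j * M₀ (Sum.inl j) i))
    (L : List α) (k : α)
    (ih : PhaseInv B₁ P M₀ L)
    (hg : ∀ a, 0 ≤ mutateSeq L (Matrix.fromRows B₁ 1) (Sum.inr a) k) :
    PhaseInv B₁ P M₀ (L ++ [k]) := by
  obtain ⟨i1, i2, i3, i4, i5, i6, i7⟩ := ih
  have hskewM : ∀ i j, S i * mutateSeq (L.map Sum.inl) M₀ (Sum.inl i) j
      = -(S j * mutateSeq (L.map Sum.inl) M₀ (Sum.inl j) i) :=
    skew_mutateSeq S hS (L.map Sum.inl) M₀ hskew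
  have hB2k : ∀ b, 0 ≤ mutateSeq (L.map Sum.inl) M₀ (Sum.inl (Sum.inr b)) (Sum.inl k) := by
    intro b
    rw [i6]
    exact Finset.sum_nonneg fun a _ => mul_nonneg (hP b a) (hg a)
  have hB3k : ∀ j : β, mutateSeq (L.map Sum.inl) M₀ (Sum.inl (Sum.inl k)) (Sum.inr j) ≤ 0 := by
    intro j
    have h := hskewM (Sum.inl k) (Sum.inr j)
    have h2 := mul_nonneg (hS (Sum.inr j)).le (hB2k j)
    nlinarith [hS (Sum.inl k : α ⊕ β)]
  unfold PhaseInv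
  refine ⟨?_, ?_, ?_, ?_, ?_, ?_, ?_⟩ <;>
    simp only [List.map_append, List.map_cons, List.map_nil, mutateSeq_concat]
  · intro a j
    by_cases hak : a = k
    · by_cases hjk : j = k
      · rw [hak, hjk, mutate_col, mutate_col, i1]
      · rw [hak, mutate_row, mutate_row, i1]
    · by_cases hjk : j = k
      · rw [hjk, mutate_col, mutate_col, i1]
      · rw [mutate_else _ (by simp [hak]) (by simp [hjk]),
          mutate_else _ (by simp [hak]) hjk, i1, i1, i1]
  · intro a j
    by_cases hjk : j = k
    · rw [hjk, mutate_col, mutate_col, i2]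
    · rw [mutate_else _ (by simp) (by simp [hjk]),
        mutate_else _ (by simp) hjk, i2, i2, i1]
  · intro b j
    by_cases hjk : j = k
    · rw [hjk, mutate_col, i3, neg_zero]
    · rw [mutate_else _ (by simp) (by simp [hjk]), i3, i3]
      simp
  · intro a j
    rw [mutate_else _ (by simp) (by simp), i4, i2,
      sign_mul_max_eq_zero (hg a) (hB3k j)]
    ring
  · intro b j
    rw [mutate_else _ (by simp) (by simp), i3, i5]
    simp
  · intro b j
    by_cases hjk : j = k
    · rw [hjk, mutate_col, i6]
      simp only [mutate_col]
      simp [mul_neg, Finset.sum_neg_distrib]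
    · have hX : 0 ≤ ∑ a, P b a * mutateSeq L (Matrix.fromRows B₁ 1) (Sum.inr a) k :=
        Finset.sum_nonneg fun a _ => mul_nonneg (hP b a) (hg a)
      rw [mutate_else _ (by simp) (by simp [hjk]), i6, i6, i1,
        sign_mul_max_of_nonneg hX]
      have hterm : ∀ a : α, mutate k (mutateSeq L (Matrix.fromRows B₁ 1)) (Sum.inr a) j
          = mutateSeq L (Matrix.fromRows B₁ 1) (Sum.inr a) j
            + mutateSeq L (Matrix.fromRows B₁ 1) (Sum.inr a) k
              * max (mutateSeq L (Matrix.fromRows B₁ 1) (Sum.inl k) j) 0 := by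
        intro a
        rw [mutate_else _ (by simp) hjk, sign_mul_max_of_nonneg (hg a)]
      simp only [hterm]
      rw [Finset.sum_mul, ← Finset.sum_add_distrib]
      exact Finset.sum_congr rfl fun a _ => by ring
  · intro b j
    rw [mutate_else _ (by simp) (by simp), i7,
      sign_mul_max_eq_zero (hB2k b) (hB3k j)]
    ring

lemma phase (S : α ⊕ β → ℤ) (hS : ∀ i, 0 < S i)
    (B₁ : Matrix α α ℤ) (P : Matrix β α ℤ) (hP : ∀ b a, 0 ≤ P b a)
    (M₀ : Matrix ((α ⊕ β) ⊕ (α ⊕ β)) (α ⊕ β) ℤ)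
    (hskew : ∀ i j, S i * M₀ (Sum.inl i) j = -(S j * M₀ (Sum.inl j) i))
    (h11 : ∀ a j, M₀ (Sum.inl (Sum.inl a)) (Sum.inl j) = B₁ a j)
    (h21 : ∀ b j, M₀ (Sum.inl (Sum.inr b)) (Sum.inl j) = P b j)
    (hC11 : ∀ a j, M₀ (Sum.inr (Sum.inl a)) (Sum.inl j) = if a = j then 1 else 0)
    (hC12 : ∀ a (j : β), M₀ (Sum.inr (Sum.inl a)) (Sum.inr j) = 0)
    (hC21 : ∀ b (j : α), M₀ (Sum.inr (Sum.inr b)) (Sum.inl j) = 0)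
    (L : List α)
    (hg : ∀ (t : ℕ) (ht : t < L.length) (a : α),
      0 ≤ mutateSeq (L.take t) (Matrix.fromRows B₁ 1) (Sum.inr a) (L.get ⟨t, ht⟩)) :
    ∀ t, t ≤ L.length → PhaseInv B₁ P M₀ (L.take t) := by
  intro t
  induction t with
  | zero =>
    intro _
    unfold PhaseInv
    simp only [List.take_zero, List.map_nil, mutateSeq_nil]
    refine ⟨?_, ?_, ?_, ?_, ?_, ?_, ?_⟩
    · intro a j; rw [h11, Matrix.fromRows_apply_inl]
    · intro a j; rw [hC11, Matrix.fromRows_apply_inr, Matrix.one_apply]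
    · exact hC21
    · exact hC12
    · intro b j; trivial
    · intro b j
      rw [h21]
      simp [Matrix.fromRows_apply_inr, Matrix.one_apply, mul_ite]
    · intro b j; trivial
  | succ t ihp =>
    intro ht1
    have ht : t < L.length := by omega
    have htake : L.take (t + 1) = L.take t ++ [L.get ⟨t, ht⟩] := by
      rw [List.take_succ, List.getElem?_eq_getElem ht]
      simp [List.get_eq_getElem]
    rw [htake]
    exact phase_step S hS B₁ P hP M₀ hskew (L.take t) (L.get ⟨t, ht⟩)
      (ihp ht.le) (hg t ht)

/- ------------------------------------------------------------------ -/
/- Phase 2: mutations at `Sum.inr` indices                             -/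
/- ------------------------------------------------------------------ -/

def PhaseInv2 (B₄ : Matrix β β ℤ) (P : Matrix α β ℤ)
    (M₀ : Matrix ((α ⊕ β) ⊕ (α ⊕ β)) (α ⊕ β) ℤ) (L : List β) : Prop :=
  (∀ b j, mutateSeq (L.map Sum.inr) M₀ (Sum.inl (Sum.inr b)) (Sum.inr j)
      = mutateSeq L (Matrix.fromRows B₄ 1) (Sum.inl b) j) ∧
  (∀ b j, mutateSeq (L.map Sum.inr) M₀ (Sum.inr (Sum.inr b)) (Sum.inr j)
      = mutateSeq L (Matrix.fromRows B₄ 1) (Sum.inr b) j) ∧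
  (∀ a (j : β), mutateSeq (L.map Sum.inr) M₀ (Sum.inr (Sum.inl a)) (Sum.inr j) = 0) ∧
  (∀ a (j : α), mutateSeq (L.map Sum.inr) M₀ (Sum.inr (Sum.inl a)) (Sum.inl j)
      = M₀ (Sum.inr (Sum.inl a)) (Sum.inl j)) ∧
  (∀ b (j : α), mutateSeq (L.map Sum.inr) M₀ (Sum.inr (Sum.inr b)) (Sum.inl j) = 0) ∧
  (∀ a (j : β), mutateSeq (L.map Sum.inr) M₀ (Sum.inl (Sum.inl a)) (Sum.inr j)
      = ∑ b, P a b * mutateSeq L (Matrix.fromRows B₄ 1) (Sum.inr b) j)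

lemma phase_step2 (S : α ⊕ β → ℤ) (hS : ∀ i, 0 < S i)
    (B₄ : Matrix β β ℤ) (P : Matrix α β ℤ) (hP : ∀ a b, 0 ≤ P a b)
    (M₀ : Matrix ((α ⊕ β) ⊕ (α ⊕ β)) (α ⊕ β) ℤ)
    (hskew : ∀ i j, S i * M₀ (Sum.inl i) j = -(S j * M₀ (Sum.inl j) i))
    (L : List β) (k : β)
    (ih : PhaseInv2 B₄ P M₀ L)
    (hg : ∀ b, 0 ≤ mutateSeq L (Matrix.fromRows B₄ 1) (Sum.inr b) k) :
    PhaseInv2 B₄ P M₀ (L ++ [k]) := by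
  obtain ⟨i1, i2, i3, i4, i5, i6⟩ := ih
  have hskewM : ∀ i j, S i * mutateSeq (L.map Sum.inr) M₀ (Sum.inl i) j
      = -(S j * mutateSeq (L.map Sum.inr) M₀ (Sum.inl j) i) :=
    skew_mutateSeq S hS (L.map Sum.inr) M₀ hskew
  have hB3k : ∀ a, 0 ≤ mutateSeq (L.map Sum.inr) M₀ (Sum.inl (Sum.inl a)) (Sum.inr k) := by
    intro a
    rw [i6]
    exact Finset.sum_nonneg fun b _ => mul_nonneg (hP a b) (hg b)
  have hB2k : ∀ j : α, mutateSeq (L.map Sum.inr) M₀ (Sum.inl (Sum.inr k)) (Sum.inl j) ≤ 0 := by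
    intro j
    have h := hskewM (Sum.inr k) (Sum.inl j)
    have h2 := mul_nonneg (hS (Sum.inl j)).le (hB3k j)
    nlinarith [hS (Sum.inr k : α ⊕ β)]
  unfold PhaseInv2
  refine ⟨?_, ?_, ?_, ?_, ?_, ?_⟩ <;>
    simp only [List.map_append, List.map_cons, List.map_nil, mutateSeq_concat]
  · intro b j
    by_cases hbk : b = k
    · by_cases hjk : j = k
      · rw [hbk, hjk, mutate_col, mutate_col, i1]
      · rw [hbk, mutate_row, mutate_row, i1]
    · by_cases hjk : j = k
      · rw [hjk, mutate_col, mutate_col, i1]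
      · rw [mutate_else _ (by simp [hbk]) (by simp [hjk]),
          mutate_else _ (by simp [hbk]) hjk, i1, i1, i1]
  · intro b j
    by_cases hjk : j = k
    · rw [hjk, mutate_col, mutate_col, i2]
    · rw [mutate_else _ (by simp) (by simp [hjk]),
        mutate_else _ (by simp) hjk, i2, i2, i1]
  · intro a j
    by_cases hjk : j = k
    · rw [hjk, mutate_col, i3, neg_zero]
    · rw [mutate_else _ (by simp) (by simp [hjk]), i3, i3]
      simp
  · intro a j
    rw [mutate_else _ (by simp) (by simp), i4, i3]
    simp
  · intro b j
    rw [mutate_else _ (by simp) (by simp), i2,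
      sign_mul_max_eq_zero (hg b) (hB2k j), i5]
    ring
  · intro a j
    by_cases hjk : j = k
    · rw [hjk, mutate_col, i6]
      simp only [mutate_col]
      simp [mul_neg, Finset.sum_neg_distrib]
    · have hX : 0 ≤ ∑ b, P a b * mutateSeq L (Matrix.fromRows B₄ 1) (Sum.inr b) k :=
        Finset.sum_nonneg fun b _ => mul_nonneg (hP a b) (hg b)
      rw [mutate_else _ (by simp) (by simp [hjk]), i6, i6, i1,
        sign_mul_max_of_nonneg hX]
      have hterm : ∀ b : β, mutate k (mutateSeq L (Matrix.fromRows B₄ 1)) (Sum.inr b) j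
          = mutateSeq L (Matrix.fromRows B₄ 1) (Sum.inr b) j
            + mutateSeq L (Matrix.fromRows B₄ 1) (Sum.inr b) k
              * max (mutateSeq L (Matrix.fromRows B₄ 1) (Sum.inl k) j) 0 := by
        intro b
        rw [mutate_else _ (by simp) hjk, sign_mul_max_of_nonneg (hg b)]
      simp only [hterm]
      rw [Finset.sum_mul, ← Finset.sum_add_distrib]
      exact Finset.sum_congr rfl fun b _ => by ring

lemma phase2 (S : α ⊕ β → ℤ) (hS : ∀ i, 0 < S i)
    (B₄ : Matrix β β ℤ) (P : Matrix α β ℤ) (hP : ∀ a b, 0 ≤ P a b)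
    (M₀ : Matrix ((α ⊕ β) ⊕ (α ⊕ β)) (α ⊕ β) ℤ)
    (hskew : ∀ i j, S i * M₀ (Sum.inl i) j = -(S j * M₀ (Sum.inl j) i))
    (h11 : ∀ b j, M₀ (Sum.inl (Sum.inr b)) (Sum.inr j) = B₄ b j)
    (h21 : ∀ a j, M₀ (Sum.inl (Sum.inl a)) (Sum.inr j) = P a j)
    (hC11 : ∀ b j, M₀ (Sum.inr (Sum.inr b)) (Sum.inr j) = if b = j then 1 else 0)
    (hC12 : ∀ b (j : α), M₀ (Sum.inr (Sum.inr b)) (Sum.inl j) = 0)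
    (hC21 : ∀ a (j : β), M₀ (Sum.inr (Sum.inl a)) (Sum.inr j) = 0)
    (L : List β)
    (hg : ∀ (t : ℕ) (ht : t < L.length) (b : β),
      0 ≤ mutateSeq (L.take t) (Matrix.fromRows B₄ 1) (Sum.inr b) (L.get ⟨t, ht⟩)) :
    ∀ t, t ≤ L.length → PhaseInv2 B₄ P M₀ (L.take t) := by
  intro t
  induction t with
  | zero =>
    intro _
    unfold PhaseInv2
    simp only [List.take_zero, List.map_nil, mutateSeq_nil]
    refine ⟨?_, ?_, ?_, ?_, ?_, ?_⟩
    · intro b j; rw [h11, Matrix.fromRows_apply_inl]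
    · intro b j; rw [hC11, Matrix.fromRows_apply_inr, Matrix.one_apply]
    · exact hC21
    · intro a j; trivial
    · exact hC12
    · intro a j
      rw [h21]
      simp [Matrix.fromRows_apply_inr, Matrix.one_apply, mul_ite]
  | succ t ihp =>
    intro ht1
    have ht : t < L.length := by omega
    have htake : L.take (t + 1) = L.take t ++ [L.get ⟨t, ht⟩] := by
      rw [List.take_succ, List.getElem?_eq_getElem ht]
      simp [List.get_eq_getElem]
    rw [htake]
    exact phase_step2 S hS B₄ P hP M₀ hskew (L.take t) (L.get ⟨t, ht⟩)
      (ihp ht.le) (hg t ht)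

end Phase

/-- Concatenation of maximal green sequences of the diagonal blocks is a maximal
green sequence of the whole matrix, provided the bottom-left block is nonnegative. -/
theorem mgs_of_blocks {n m : ℕ}
    (B : Matrix (Fin n ⊕ Fin m) (Fin n ⊕ Fin m) ℤ)
    (S : Fin n ⊕ Fin m → ℤ) (hS : ∀ i, 0 < S i)
    (hskew : ∀ i j, S i * B i j = -(S j * B j i))
    (hB₂ : ∀ (i : Fin m) (j : Fin n), 0 ≤ B (Sum.inr i) (Sum.inl j))
    (ks : List (Fin n)) (js : List (Fin m))
    (hks : IsMGS (fun i j => B (Sum.inl i) (Sum.inl j)) ks)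
    (hjs : IsMGS (fun i j => B (Sum.inr i) (Sum.inr j)) js) :
    IsMGS B (ks.map Sum.inl ++ js.map Sum.inr) := by
  classical
  obtain ⟨hksg, hksr⟩ := hks
  obtain ⟨hjsg, hjsr⟩ := hjs
  -- skew of the principal part of the initial extended matrix
  have hskew0 : ∀ i j, S i * (Matrix.fromRows B (1 : Matrix (Fin n ⊕ Fin m) (Fin n ⊕ Fin m) ℤ)) (Sum.inl i) j
      = -(S j * (Matrix.fromRows B (1 : Matrix (Fin n ⊕ Fin m) (Fin n ⊕ Fin m) ℤ)) (Sum.inl j) i) := fun i j => hskew i j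
  -- Phase 1
  have P1 : ∀ t, t ≤ ks.length →
      PhaseInv (fun i j => B (Sum.inl i) (Sum.inl j))
        (fun b a => B (Sum.inr b) (Sum.inl a)) (Matrix.fromRows B 1) (ks.take t) := by
    refine phase S hS _ _ hB₂ _ hskew0 ?_ ?_ ?_ ?_ ?_ ks ?_
    · intro a j; rfl
    · intro b j; rfl
    · intro a j
      show (1 : Matrix (Fin n ⊕ Fin m) (Fin n ⊕ Fin m) ℤ) (Sum.inl a) (Sum.inl j)
          = if a = j then 1 else 0
      simp [Matrix.one_apply]
    · intro a j
      show (1 : Matrix (Fin n ⊕ Fin m) (Fin n ⊕ Fin m) ℤ) (Sum.inl a) (Sum.inr j) = 0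
      simp [Matrix.one_apply]
    · intro b j
      show (1 : Matrix (Fin n ⊕ Fin m) (Fin n ⊕ Fin m) ℤ) (Sum.inr b) (Sum.inl j) = 0
      simp [Matrix.one_apply]
    · intro t ht a
      exact hksg t ht a
  have P1f := P1 ks.length le_rfl
  rw [List.take_length] at P1f
  obtain ⟨p1, p2, p3, p4, p5, p6, p7⟩ := P1f
  -- final C-matrix of B₁ is nonpositive
  have hE1 : ∀ i j, mutateSeq ks
      (Matrix.fromRows (fun i j => B (Sum.inl i) (Sum.inl j)) 1) (Sum.inr i) j ≤ 0 :=
    fun i j => hksr i j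
  -- skew at the middle point
  have hskewMid := skew_mutateSeq S hS (ks.map Sum.inl) (Matrix.fromRows B 1) hskew0
  -- the B₃ block at the middle point is nonnegative
  have hP' : ∀ (a : Fin n) (j : Fin m),
      0 ≤ mutateSeq (ks.map Sum.inl) (Matrix.fromRows B 1) (Sum.inl (Sum.inl a)) (Sum.inr j) := by
    intro a j
    have h := hskewMid (Sum.inl a) (Sum.inr j)
    have h2 : mutateSeq (ks.map Sum.inl) (Matrix.fromRows B 1)
        (Sum.inl (Sum.inr j)) (Sum.inl a) ≤ 0 := by
      rw [p6]
      exact Finset.sum_nonpos fun c _ =>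
        mul_nonpos_iff.2 (Or.inl ⟨hB₂ j c, hE1 c a⟩)
    have h3 := mul_nonpos_iff.2 (Or.inl ⟨(hS (Sum.inr j : Fin n ⊕ Fin m)).le, h2⟩)
    nlinarith [hS (Sum.inl a : Fin n ⊕ Fin m)]
  -- Phase 2
  have P2 : ∀ t, t ≤ js.length →
      PhaseInv2 (fun i j => B (Sum.inr i) (Sum.inr j))
        (fun a b => mutateSeq (ks.map Sum.inl) (Matrix.fromRows B 1)
          (Sum.inl (Sum.inl a)) (Sum.inr b))
        (mutateSeq (ks.map Sum.inl) (Matrix.fromRows B 1)) (js.take t) := by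
    refine phase2 S hS _ _ hP' _ hskewMid ?_ ?_ ?_ ?_ ?_ js ?_
    · intro b j
      rw [p7]
      rfl
    · intro a j; rfl
    · intro b j
      rw [p5]
      show (1 : Matrix (Fin n ⊕ Fin m) (Fin n ⊕ Fin m) ℤ) (Sum.inr b) (Sum.inr j)
          = if b = j then 1 else 0
      simp [Matrix.one_apply]
    · exact p3
    · exact p4
    · intro t ht b
      exact hjsg t ht b
  constructor
  · -- green sequence
    intro t ht
    by_cases hts : t < ks.length
    · have htake : (ks.map Sum.inl ++ js.map Sum.inr).take t
          = (ks.take t).map (Sum.inl : Fin n → Fin n ⊕ Fin m) := by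
        rw [List.take_append]
        have h2 : t - (ks.map (Sum.inl : Fin n → Fin n ⊕ Fin m)).length = 0 := by
          simp only [List.length_map]; omega
        rw [h2, ← List.map_take]
        simp
      have hget : (ks.map Sum.inl ++ js.map Sum.inr).get ⟨t, ht⟩
          = Sum.inl (ks.get ⟨t, hts⟩) := by
        simp only [List.get_eq_getElem]
        rw [List.getElem_append_left (by simpa using hts)]
        simp
      rw [htake, hget]
      intro i
      obtain ⟨q1, q2, q3, q4, q5, q6, q7⟩ := P1 t hts.le
      rw [Cmat_apply]
      cases i with
      | inl a =>
        rw [q2]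
        exact hksg t hts a
      | inr b =>
        rw [q3]
  -- second half: js part
    · push_neg at hts
      have ht2 : t - ks.length < js.length := by
        have := ht
        simp only [List.length_append, List.length_map] at this
        omega
      have htake : (ks.map Sum.inl ++ js.map Sum.inr).take t
          = ks.map Sum.inl ++ (js.take (t - ks.length)).map Sum.inr := by
        rw [List.take_append]
        congr 1
        · exact List.take_of_length_le (by simpa using hts)
        · rw [← List.map_take]
          congr 2
          simp
      have hget : (ks.map Sum.inl ++ js.map Sum.inr).get ⟨t, ht⟩
          = Sum.inr (js.get ⟨t - ks.length, ht2⟩) := by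
        simp only [List.get_eq_getElem]
        rw [List.getElem_append_right (by simpa using hts)]
        simp
      rw [htake, hget]
      intro i
      obtain ⟨q1, q2, q3, q4, q5, q6⟩ := P2 (t - ks.length) ht2.le
      rw [Cmat_apply, mutateSeq_append]
      cases i with
      | inl a =>
        rw [q3]
      | inr b =>
        rw [q2]
        exact hjsg (t - ks.length) ht2 b
  · -- green to red
    intro i j
    have P2f := P2 js.length le_rfl
    rw [List.take_length] at P2f
    obtain ⟨q1, q2, q3, q4, q5, q6⟩ := P2f
    rw [Cmat_apply, mutateSeq_append]
    rcases i with a | b <;> rcases j with c | d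
    · rw [q4, p2]
      exact hksr a c
    · rw [q3]
    · rw [q5]
    · rw [q2]
      exact hjsr b d
end
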